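/- arXiv:2305.10081 — 12 statements merged into one kernel-verified Lean document; each statement's English description precedes it below -/
import Mathlib

section
/- In a skew brace A, let B and C be subgroups of (A,·) generated by sets X and Y respectively. If b*y = 1 for all b ∈ B and y ∈ Y, then b*c = 1 for all b ∈ B and c ∈ C. -/
/-- A skew brace: a set with two group operations `·` (from `Group A`) and `∘` (`circ`)
sharing the same identity, satisfying the brace relation. -/
class SkewBrace (A : Type*) extends Group A where
  circ : A → A → A
  circ_assoc : ∀ a b c : A, circ (circ a b) c = circ a (circ b c)
  one_circ : ∀ a : A, circ 1 a = a
  circ_one : ∀ a : A, circ a 1 = a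
  sinv : A → A
  sinv_circ : ∀ a : A, circ (sinv a) a = 1
  circ_sinv : ∀ a : A, circ a (sinv a) = 1
  brace : ∀ a b c : A, circ a (b * c) = circ a b * a⁻¹ * circ a c

namespace SkewBrace

variable {A : Type*} [SkewBrace A]

/-- `a * b = a⁻¹ (a ∘ b) b⁻¹` (inverses taken in `(A, ·)`). -/
def star (a b : A) : A := a⁻¹ * circ a b * b⁻¹

/-- The lambda map `λ_a(b) = a⁻¹ (a ∘ b)`. -/
def lam (a b : A) : A := a⁻¹ * circ a b

/-- The lambda map of the opposite skew brace, `λᵒᵖ_a(b) = (a ∘ b) a⁻¹`. -/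
def lamop (a b : A) : A := circ a b * a⁻¹

end SkewBrace
open SkewBrace in
open SkewBrace in
/-- If `B = ⟨X⟩` and `C = ⟨Y⟩` are subgroups of `(A,·)` and `b*y = 1` for all
`b ∈ B`, `y ∈ Y`, then `b*c = 1` for all `b ∈ B`, `c ∈ C`. -/
theorem star_eq_one_of_gen {A : Type*} [SkewBrace A] (B C : Subgroup A) (X Y : Set A)
    (hB : Subgroup.closure X = B) (hC : Subgroup.closure Y = C)
    (h : ∀ b ∈ B, ∀ y ∈ Y, star b y = 1) :
    ∀ b ∈ B, ∀ c ∈ C, star b c = 1 := by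
  intro b hb c hc
  have key : ∀ x : A, star b x = 1 ↔ circ b x = b * x := by
    intro x
    unfold SkewBrace.star
    constructor
    · intro hx
      have : b * (b⁻¹ * circ b x * x⁻¹) * x = b * 1 * x := by rw [hx]
      group at this
      simpa using this
    · intro hx; rw [hx]; group
  rw [key]
  rw [← hC] at hc
  induction hc using Subgroup.closure_induction with
  | mem y hy => exact (key y).mp (h b hb y hy)
  | one => simp [SkewBrace.circ_one]
  | mul u v _ _ hu hv => rw [SkewBrace.brace, hu, hv]; group
  | inv u _ hu =>
    have h1 : circ b (u * u⁻¹) = b := by simp [SkewBrace.circ_one]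
    rw [SkewBrace.brace, hu] at h1
    have h2 : circ b u⁻¹ = (b * u * b⁻¹)⁻¹ * b := by rw [eq_inv_mul_iff_mul_eq]; exact h1
    rw [h2]; group
end

section
/- In a skew brace A, let B and C be subgroups of (A,·) generated by X and Y respectively, with X ⊆ Y. If x*y = 1 for all x ∈ X and y ∈ Y, then b*c = 1 for all b ∈ B and c ∈ C. -/
namespace SkewBraceAux

open SkewBrace

variable {A : Type*} [SkewBrace A]

theorem circ_eq (a b : A) : circ a b = a * lam a b := by
  simp [lam, mul_assoc]

theorem lam_mul (a b c : A) : lam a (b * c) = lam a b * lam a c := by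
  simp [lam, brace, mul_assoc]

theorem lam_one (a : A) : lam a 1 = 1 := by simp [lam, circ_one]

theorem one_lam (c : A) : lam 1 c = c := by simp [lam, one_circ]

theorem lam_inv (a b : A) : lam a b⁻¹ = (lam a b)⁻¹ := by
  have h := lam_mul a b⁻¹ b
  rw [inv_mul_cancel, lam_one] at h
  exact eq_inv_of_mul_eq_one_left h.symm

theorem circ_inv (a b : A) : circ a b⁻¹ = a * (circ a b)⁻¹ * a := by
  have h := brace a b b⁻¹
  rw [mul_inv_cancel, circ_one] at h
  calc circ a b⁻¹ = (circ a b * a⁻¹)⁻¹ * (circ a b * a⁻¹ * circ a b⁻¹) := by group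
    _ = (circ a b * a⁻¹)⁻¹ * a := by rw [← h]
    _ = a * (circ a b)⁻¹ * a := by group

theorem lam_circ (a b c : A) : lam (circ a b) c = lam a (lam b c) := by
  unfold lam
  rw [brace, circ_inv, circ_assoc]
  group

theorem lam_sinv_lam (a c : A) : lam (sinv a) (lam a c) = c := by
  rw [← lam_circ, sinv_circ, one_lam]

theorem star_eq_one (a b : A) (hl : lam a b = b) : SkewBrace.star a b = 1 := by
  unfold SkewBrace.star
  rw [circ_eq, hl]
  group

end SkewBraceAux

open SkewBrace in
/-- If `B = ⟨X⟩`, `C = ⟨Y⟩` with `X ⊆ Y` and `x*y = 1` for all `x ∈ X`, `y ∈ Y`,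
then `b*c = 1` for all `b ∈ B`, `c ∈ C`. -/
theorem star_eq_one_of_gen_subset {A : Type*} [SkewBrace A] (B C : Subgroup A) (X Y : Set A)
    (hB : Subgroup.closure X = B) (hC : Subgroup.closure Y = C) (hXY : X ⊆ Y)
    (h : ∀ x ∈ X, ∀ y ∈ Y, star x y = 1) :
    ∀ b ∈ B, ∀ c ∈ C, star b c = 1 := by
  open SkewBraceAux in
  subst hB hC
  -- star x y = 1 means lam x y = y
  have hfix : ∀ x ∈ X, ∀ y ∈ Y, lam x y = y := by
    intro x hx y hy
    have := h x hx y hy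
    unfold SkewBrace.star lam at *
    have : x⁻¹ * circ x y = y := by
      have := mul_eq_one_iff_eq_inv.mp this
      rw [this]; group
    exact this
  -- Step 1: lam x fixes all of closure Y
  have h1 : ∀ x ∈ X, ∀ c ∈ Subgroup.closure Y, lam x c = c := by
    intro x hx c hc
    induction hc using Subgroup.closure_induction with
    | mem y hy => exact hfix x hx y hy
    | one => exact lam_one x
    | mul a b _ _ ha hb => rw [lam_mul, ha, hb]
    | inv a _ ha => rw [lam_inv, ha]
  -- Main induction: every b in closure X lies in closure Y and lam b fixes closure Y
  have main : ∀ b ∈ Subgroup.closure X,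
      b ∈ Subgroup.closure Y ∧ ∀ c ∈ Subgroup.closure Y, lam b c = c := by
    intro b hb
    induction hb using Subgroup.closure_induction with
    | mem x hx =>
        exact ⟨Subgroup.subset_closure (hXY hx), h1 x hx⟩
    | one => exact ⟨one_mem _, fun c _ => one_lam c⟩
    | mul a b _ _ ha hb =>
        refine ⟨mul_mem ha.1 hb.1, fun c hc => ?_⟩
        have hab : a * b = circ a b := by
          rw [circ_eq, ha.2 b hb.1]
        rw [hab, lam_circ, hb.2 c hc, ha.2 c hc]
    | inv a _ ha =>
        refine ⟨inv_mem ha.1, fun c hc => ?_⟩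
        -- sinv a = a⁻¹
        have hinv : circ a a⁻¹ = 1 := by
          rw [circ_eq, ha.2 a⁻¹ (inv_mem ha.1), mul_inv_cancel]
        have hsinv : SkewBrace.sinv a = a⁻¹ := by
          have : circ (sinv a) (circ a a⁻¹) = a⁻¹ := by
            rw [← circ_assoc, sinv_circ, one_circ]
          rw [hinv, circ_one] at this
          exact this
        rw [← hsinv, ← ha.2 c hc, lam_sinv_lam, ha.2 c hc]
  intro b hb c hc
  exact star_eq_one b c ((main b hb).2 c hc)
end

section
/- Let A be a skew brace and B, C sub-skew braces such that A = B·C (every element of A is a product b·c with b ∈ B, c ∈ C). If B is a left ideal of A (i.e., λ_a(B) ⊆ B for all a ∈ A), then A = B∘C. -/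
open SkewBrace in
/-- If `A = B·C` for sub-skew braces `B`, `C` and `B` is a left ideal of `A`,
then `A = B∘C`. -/
theorem dot_factorization_to_circ {A : Type*} [SkewBrace A] (B C : Subgroup A)
    (hBcirc : ∀ x ∈ B, ∀ y ∈ B, circ x y ∈ B) (hBsinv : ∀ x ∈ B, sinv x ∈ B)
    (hCcirc : ∀ x ∈ C, ∀ y ∈ C, circ x y ∈ C) (hCsinv : ∀ x ∈ C, sinv x ∈ C)
    (hfact : ∀ a : A, ∃ b ∈ B, ∃ c ∈ C, a = b * c)
    (hleft : ∀ a : A, ∀ x ∈ B, lam a x ∈ B) :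
    ∀ a : A, ∃ b ∈ B, ∃ c ∈ C, a = circ b c := by
  intro a
  obtain ⟨b, hb, c, hc, h⟩ := hfact (sinv a)⁻¹
  have hc1 : c⁻¹ = sinv a * b := by
    have : c = b⁻¹ * (sinv a)⁻¹ := by rw [h]; group
    rw [this]; group
  have key : circ a c⁻¹ = lam a b := by
    rw [hc1, brace, circ_sinv, lam]; group
  refine ⟨circ a c⁻¹, key ▸ hleft a b hb, sinv c⁻¹, hCsinv _ (inv_mem hc), ?_⟩
  rw [circ_assoc, circ_sinv, circ_one]
end

section
/- Let A be a skew brace and B, C sub-skew braces with A = B∘C. If B is a right ideal of A (i.e., λ_x(a)a⁻¹ ∈ B for all x ∈ B, a ∈ A), then A = B·C. -/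
open SkewBrace in
/-- If `A = B∘C` for sub-skew braces `B`, `C` and `B` is a right ideal of `A`,
then `A = B·C`. -/
theorem circ_factorization_to_dot {A : Type*} [SkewBrace A] (B C : Subgroup A)
    (hBcirc : ∀ x ∈ B, ∀ y ∈ B, circ x y ∈ B) (hBsinv : ∀ x ∈ B, sinv x ∈ B)
    (hCcirc : ∀ x ∈ C, ∀ y ∈ C, circ x y ∈ C) (hCsinv : ∀ x ∈ C, sinv x ∈ C)
    (hfact : ∀ a : A, ∃ b ∈ B, ∃ c ∈ C, a = circ b c)
    (hright : ∀ x ∈ B, ∀ a : A, lam x a * a⁻¹ ∈ B) :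
    ∀ a : A, ∃ b ∈ B, ∃ c ∈ C, a = b * c := by
  intro a
  obtain ⟨b, hb, c, hc, rfl⟩ := hfact a
  refine ⟨b * (lam b c * c⁻¹), B.mul_mem hb (hright b hb c), c, hc, ?_⟩
  simp [lam, mul_assoc]
end

section
/- Let A be a skew brace with A = B·C where B and C are sub-skew braces. If B is a trivial skew brace (b₁∘b₂ = b₁b₂ for all b₁,b₂ ∈ B), then the subgroup B*C of (A,·) generated by {b*c : b ∈ B, c ∈ C} is a normal subgroup of (A,·). -/
namespace SkewBrace

variable {A : Type*} [SkewBrace A]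

/-- Key expansion: `a * (xy) = (a*x) · x (a*y) x⁻¹`. -/
theorem star_mul_expand (a x y : A) :
    star a (x * y) = star a x * (x * star a y * x⁻¹) := by
  simp only [star, brace]
  group

end SkewBrace

open SkewBrace in
/-- If `A = B·C` with `B` a trivial sub-skew brace, then `B*C` is normal in `(A,·)`. -/
theorem starSubgroup_normal {A : Type*} [SkewBrace A] (B C : Subgroup A)
    (hBcirc : ∀ x ∈ B, ∀ y ∈ B, circ x y ∈ B) (hBsinv : ∀ x ∈ B, sinv x ∈ B)
    (hCcirc : ∀ x ∈ C, ∀ y ∈ C, circ x y ∈ C) (hCsinv : ∀ x ∈ C, sinv x ∈ C)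
    (hfact : ∀ a : A, ∃ b ∈ B, ∃ c ∈ C, a = b * c)
    (hBtriv : ∀ x ∈ B, ∀ y ∈ B, circ x y = x * y) :
    (Subgroup.closure {z : A | ∃ b ∈ B, ∃ c ∈ C, z = star b c}).Normal := by
  set S : Set A := {z : A | ∃ b ∈ B, ∃ c ∈ C, z = SkewBrace.star b c} with hS
  set N := Subgroup.closure S with hN
  -- triviality: `b * b' = 1` for `b, b' ∈ B`
  have hstar_triv : ∀ b ∈ B, ∀ b' ∈ B, SkewBrace.star b b' = 1 := by
    intro b hb b' hb'
    simp only [SkewBrace.star, hBtriv b hb b' hb']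
    group
  -- Step B: `SkewBrace.star b a ∈ N` for every `b ∈ B` and every `a : A`
  have hstarB : ∀ b ∈ B, ∀ a : A, SkewBrace.star b a ∈ N := by
    intro b hb a
    obtain ⟨b', hb', c', hc', hfa⟩ := hfact a⁻¹
    have ha : a = c'⁻¹ * b'⁻¹ := by
      have := congrArg (·⁻¹) hfa
      simpa [mul_inv_rev] using this
    rw [ha, SkewBrace.star_mul_expand, hstar_triv b hb b'⁻¹ (B.inv_mem hb')]
    simp only [mul_one, mul_inv_cancel, mul_one]
    exact Subgroup.subset_closure ⟨b, hb, c'⁻¹, C.inv_mem hc', rfl⟩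
  constructor
  intro n hn g
  induction hn using Subgroup.closure_induction with
  | mem z hz =>
    obtain ⟨b, hb, c, hc, rfl⟩ := hz
    have key : g * SkewBrace.star b c * g⁻¹ = (SkewBrace.star b g)⁻¹ * SkewBrace.star b (g * c) := by
      rw [SkewBrace.star_mul_expand b g c]
      group
    rw [key]
    exact mul_mem (inv_mem (hstarB b hb g)) (hstarB b hb (g * c))
  | one => simpa using N.one_mem
  | mul x y hx hy ihx ihy =>
    have : g * (x * y) * g⁻¹ = (g * x * g⁻¹) * (g * y * g⁻¹) := by group
    rw [this]; exact mul_mem ihx ihy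
  | inv x hx ihx =>
    have : g * x⁻¹ * g⁻¹ = (g * x * g⁻¹)⁻¹ := by group
    rw [this]; exact inv_mem ihx
end

section
/- Let A be a skew brace with A = B·C where B and C are sub-skew braces. If C is a trivial skew brace and a left ideal in A, then B*C is a left ideal in A, i.e., λ_a(B*C) ⊆ B*C for all a ∈ A. -/
namespace SkewBrace

variable {A : Type*} [SkewBrace A]

lemma lam_mul (a x y : A) : lam a (x * y) = lam a x * lam a y := by
  simp [lam, brace, mul_assoc]

lemma lam_one (a : A) : lam a 1 = 1 := by simp [lam, circ_one]

lemma one_lam (x : A) : lam 1 x = x := by simp [lam, one_circ]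

lemma lam_inv (a x : A) : lam a x⁻¹ = (lam a x)⁻¹ := by
  have h := lam_mul a x x⁻¹
  rw [mul_inv_cancel, lam_one] at h
  exact (inv_eq_of_mul_eq_one_right h.symm).symm

lemma lam_lam (a b c : A) : lam a (lam b c) = lam (circ a b) c := by
  rw [show lam b c = b⁻¹ * circ b c from rfl, lam_mul, lam_inv]
  unfold lam
  rw [← circ_assoc]
  group

lemma circ_eq_mul_lam (a y : A) : circ a y = a * lam a y := by
  simp [lam, ← mul_assoc]

lemma star_eq (a b : A) : star a b = lam a b * b⁻¹ := rfl

end SkewBrace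

open SkewBrace in
/-- If `A = B·C` with `C` a trivial sub-skew brace which is a left ideal in `A`,
then `B*C` is a left ideal in `A`. -/
theorem starSubgroup_leftIdeal {A : Type*} [SkewBrace A] (B C : Subgroup A)
    (hBcirc : ∀ x ∈ B, ∀ y ∈ B, circ x y ∈ B) (hBsinv : ∀ x ∈ B, sinv x ∈ B)
    (hCcirc : ∀ x ∈ C, ∀ y ∈ C, circ x y ∈ C) (hCsinv : ∀ x ∈ C, sinv x ∈ C)
    (hfact : ∀ a : A, ∃ b ∈ B, ∃ c ∈ C, a = b * c)
    (hCtriv : ∀ x ∈ C, ∀ y ∈ C, circ x y = x * y)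
    (hCleft : ∀ a : A, ∀ x ∈ C, lam a x ∈ C) :
    ∀ a : A, ∀ z ∈ Subgroup.closure {z : A | ∃ b ∈ B, ∃ c ∈ C, z = star b c},
      lam a z ∈ Subgroup.closure {z : A | ∃ b ∈ B, ∃ c ∈ C, z = star b c} := by
  set S : Set A := {z : A | ∃ b ∈ B, ∃ c ∈ C, z = star b c} with hS
  -- Key: for any a and c ∈ C, lam a c * c⁻¹ is a generator.
  have key : ∀ a : A, ∀ c ∈ C, lam a c * c⁻¹ ∈ S := by
    intro a c hc
    obtain ⟨b, hb, c', hc', hab⟩ := hfact a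
    have hc'' : lam (sinv b) c' ∈ C := hCleft _ _ hc'
    have ha : a = circ b (lam (sinv b) c') := by
      rw [circ_eq_mul_lam, lam_lam, circ_sinv, one_lam, hab]
    have htr : lam (lam (sinv b) c') c = c := by
      rw [show lam (lam (sinv b) c') c = (lam (sinv b) c')⁻¹ *
            circ (lam (sinv b) c') c from rfl,
          hCtriv _ hc'' _ hc, ← mul_assoc, inv_mul_cancel, one_mul]
    have hlac : lam a c = lam b c := by
      rw [ha, ← lam_lam, htr]
    exact ⟨b, hb, c, hc, by rw [star_eq, hlac]⟩
  intro a z hz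
  induction hz using Subgroup.closure_induction with
  | mem x hx =>
    obtain ⟨b, hb, c, hc, rfl⟩ := hx
    have : lam a (star b c) =
        (lam (circ a b) c * c⁻¹) * (lam a c * c⁻¹)⁻¹ := by
      rw [star_eq, lam_mul, lam_inv, lam_lam]
      group
    rw [this]
    exact mul_mem (Subgroup.subset_closure (key _ _ hc))
      (inv_mem (Subgroup.subset_closure (key _ _ hc)))
  | one => rw [lam_one]; exact one_mem _
  | mul x y _ _ hx hy => rw [lam_mul]; exact mul_mem hx hy
  | inv x _ hx => rw [lam_inv]; exact inv_mem hx
end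

section
/- Let A be a skew brace with A = B·C and A = B∘C where B and C are trivial sub-skew braces. Then A' = (B*C)·(C*B), where A' = A*A is the subgroup of (A,·) generated by all a₁*a₂. -/
section SkewBraceAuxSec

open SkewBrace

variable {A : Type*} [SkewBrace A]

lemma sb_star_oneX (a : A) : SkewBrace.star a 1 = 1 := by
  simp [SkewBrace.star, circ_one]

lemma sb_sbstar_mul (a u v : A) : SkewBrace.star a (u * v) = SkewBrace.star a u * (u * SkewBrace.star a v * u⁻¹) := by
  simp only [SkewBrace.star]
  rw [brace]
  group

lemma sb_conj_star (a u v : A) : u * SkewBrace.star a v * u⁻¹ = (SkewBrace.star a u)⁻¹ * SkewBrace.star a (u * v) := by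
  rw [sb_sbstar_mul]; group

lemma sb_circ_inv (a b : A) : circ a b⁻¹ = a * (circ a b)⁻¹ * a := by
  have h := brace a b b⁻¹
  rw [mul_inv_cancel, circ_one] at h
  calc circ a b⁻¹ = a * (circ a b)⁻¹ * (circ a b * a⁻¹ * circ a b⁻¹) := by group
    _ = a * (circ a b)⁻¹ * a := by rw [← h]

lemma sb_lam_circ (a b u : A) : lam (circ a b) u = lam a (lam b u) := by
  simp only [lam]
  rw [circ_assoc, brace, sb_circ_inv]
  group

lemma sb_lam_mul (a u v : A) : lam a (u * v) = lam a u * lam a v := by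
  simp only [lam]
  rw [brace]
  group

lemma sb_lam_one (a : A) : lam a 1 = 1 := by simp [lam, circ_one]

lemma sb_lam_inv (a u : A) : lam a u⁻¹ = (lam a u)⁻¹ := by
  have h := sb_lam_mul a u u⁻¹
  rw [mul_inv_cancel, sb_lam_one] at h
  exact (inv_eq_of_mul_eq_one_right h.symm).symm

lemma sb_star_eq (a u : A) : SkewBrace.star a u = lam a u * u⁻¹ := by
  simp [SkewBrace.star, lam, mul_assoc]

lemma sb_star_circ (a b u : A) :
    SkewBrace.star (circ a b) u = SkewBrace.star a (SkewBrace.star b u) * SkewBrace.star b u * SkewBrace.star a u := by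
  simp only [sb_star_eq, sb_lam_circ, sb_lam_mul, sb_lam_inv]
  group

lemma sb_eq_sinv_of {a x : A} (h : circ a x = 1) : x = sinv a := by
  calc x = circ 1 x := (one_circ x).symm
    _ = circ (circ (sinv a) a) x := by rw [sinv_circ]
    _ = circ (sinv a) (circ a x) := circ_assoc _ _ _
    _ = sinv a := by rw [h, circ_one]

lemma sb_sinv_circ_eq (a b : A) : sinv (circ a b) = circ (sinv b) (sinv a) := by
  refine (sb_eq_sinv_of ?_).symm
  rw [circ_assoc, ← circ_assoc b, circ_sinv, one_circ, circ_sinv]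

lemma sb_sinv_sinvX (a : A) : sinv (sinv a) = a :=
  (sb_eq_sinv_of (sinv_circ a)).symm

end SkewBraceAuxSec

open SkewBrace Pointwise in
/-- If `A = B·C` and `A = B∘C` with `B`, `C` trivial sub-skew braces, then
`A' = (B*C)·(C*B)`. -/
theorem derived_eq_product {A : Type*} [SkewBrace A] (B C : Subgroup A)
    (hBcirc : ∀ x ∈ B, ∀ y ∈ B, circ x y ∈ B) (hBsinv : ∀ x ∈ B, sinv x ∈ B)
    (hCcirc : ∀ x ∈ C, ∀ y ∈ C, circ x y ∈ C) (hCsinv : ∀ x ∈ C, sinv x ∈ C)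
    (hdot : ∀ a : A, ∃ b ∈ B, ∃ c ∈ C, a = b * c)
    (hcirc : ∀ a : A, ∃ b ∈ B, ∃ c ∈ C, a = circ b c)
    (hBtriv : ∀ x ∈ B, ∀ y ∈ B, circ x y = x * y)
    (hCtriv : ∀ x ∈ C, ∀ y ∈ C, circ x y = x * y) :
    ((Subgroup.closure {z : A | ∃ a b : A, z = star a b} : Subgroup A) : Set A) =
      ((Subgroup.closure {z : A | ∃ b ∈ B, ∃ c ∈ C, z = star b c} : Subgroup A) : Set A) *
      ((Subgroup.closure {z : A | ∃ c ∈ C, ∃ b ∈ B, z = star c b} : Subgroup A) : Set A) := by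
  set SN : Set A := {z : A | ∃ a b : A, z = SkewBrace.star a b} with hSN
  set SX : Set A := {z : A | ∃ b ∈ B, ∃ c ∈ C, z = SkewBrace.star b c} with hSX
  set SY : Set A := {z : A | ∃ c ∈ C, ∃ b ∈ B, z = SkewBrace.star c b} with hSY
  -- trivially, SkewBrace.star vanishes on B × B and C × C
  have hBstar : ∀ x ∈ B, ∀ y ∈ B, SkewBrace.star x y = 1 := by
    intro x hx y hy
    rw [SkewBrace.star, hBtriv x hx y hy]
    group
  have hCstar : ∀ x ∈ C, ∀ y ∈ C, SkewBrace.star x y = 1 := by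
    intro x hx y hy
    rw [SkewBrace.star, hCtriv x hx y hy]
    group
  -- the two factorizations in the reversed order
  have hCB : ∀ a : A, ∃ c ∈ C, ∃ b ∈ B, a = c * b := by
    intro a
    obtain ⟨b, hb, c, hc, h⟩ := hdot a⁻¹
    exact ⟨c⁻¹, inv_mem hc, b⁻¹, inv_mem hb, by
      rw [← mul_inv_rev, ← h, inv_inv]⟩
  have hCoB : ∀ a : A, ∃ c ∈ C, ∃ b ∈ B, a = circ c b := by
    intro a
    obtain ⟨b, hb, c, hc, h⟩ := hcirc (sinv a)
    refine ⟨sinv c, hCsinv c hc, sinv b, hBsinv b hb, ?_⟩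
    rw [← sb_sinv_circ_eq, ← h, sb_sinv_sinvX]
  -- the four pointwise absorption lemmas
  have P1 : ∀ b ∈ B, ∀ a : A, SkewBrace.star b a ∈ SX := by
    intro b hb a
    obtain ⟨c, hc, b₀, hb₀, rfl⟩ := hCB a
    rw [sb_sbstar_mul, hBstar b hb b₀ hb₀, mul_one, mul_inv_cancel, mul_one]
    exact ⟨b, hb, c, hc, rfl⟩
  have P2 : ∀ c ∈ C, ∀ a : A, SkewBrace.star c a ∈ SY := by
    intro c hc a
    obtain ⟨b₀, hb₀, c₀, hc₀, rfl⟩ := hdot a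
    rw [sb_sbstar_mul, hCstar c hc c₀ hc₀, mul_one, mul_inv_cancel, mul_one]
    exact ⟨c, hc, b₀, hb₀, rfl⟩
  have P3 : ∀ b ∈ B, ∀ a : A, SkewBrace.star a b ∈ SY := by
    intro b hb a
    obtain ⟨c₀, hc₀, b₀, hb₀, rfl⟩ := hCoB a
    rw [sb_star_circ, hBstar b₀ hb₀ b hb, sb_star_oneX, one_mul, one_mul]
    exact ⟨c₀, hc₀, b, hb, rfl⟩
  have P4 : ∀ c ∈ C, ∀ a : A, SkewBrace.star a c ∈ SX := by
    intro c hc a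
    obtain ⟨b₀, hb₀, c₀, hc₀, rfl⟩ := hcirc a
    rw [sb_star_circ, hCstar c₀ hc₀ c hc, sb_star_oneX, one_mul, one_mul]
    exact ⟨b₀, hb₀, c, hc, rfl⟩
  -- both closures are normal subgroups of (A, ·)
  have hXn : (Subgroup.closure SX).Normal := by
    constructor
    intro n hn g
    induction hn using Subgroup.closure_induction with
    | mem x hx =>
      obtain ⟨b, hb, c, hc, rfl⟩ := hx
      rw [sb_conj_star]
      exact mul_mem (inv_mem (Subgroup.subset_closure (P1 b hb g)))
        (Subgroup.subset_closure (P1 b hb (g * c)))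
    | one => simpa using one_mem _
    | mul x y hx hy ihx ihy =>
      have h : g * (x * y) * g⁻¹ = (g * x * g⁻¹) * (g * y * g⁻¹) := by group
      rw [h]; exact mul_mem ihx ihy
    | inv x hx ih =>
      have h : g * x⁻¹ * g⁻¹ = (g * x * g⁻¹)⁻¹ := by group
      rw [h]; exact inv_mem ih
  have hYn : (Subgroup.closure SY).Normal := by
    constructor
    intro n hn g
    induction hn using Subgroup.closure_induction with
    | mem x hx =>
      obtain ⟨c, hc, b, hb, rfl⟩ := hx
      rw [sb_conj_star]
      exact mul_mem (inv_mem (Subgroup.subset_closure (P2 c hc g)))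
        (Subgroup.subset_closure (P2 c hc (g * b)))
    | one => simpa using one_mem _
    | mul x y hx hy ihx ihy =>
      have h : g * (x * y) * g⁻¹ = (g * x * g⁻¹) * (g * y * g⁻¹) := by group
      rw [h]; exact mul_mem ihx ihy
    | inv x hx ih =>
      have h : g * x⁻¹ * g⁻¹ = (g * x * g⁻¹)⁻¹ := by group
      rw [h]; exact inv_mem ih
  -- the closure of SN equals the join of the closures of SX and SY
  have hmain : Subgroup.closure SN = Subgroup.closure SX ⊔ Subgroup.closure SY := by
    apply le_antisymm
    · rw [Subgroup.closure_le]
      rintro z ⟨a₁, a₂, rfl⟩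
      obtain ⟨b₂, hb₂, c₂, hc₂, rfl⟩ := hdot a₂
      rw [SetLike.mem_coe, sb_sbstar_mul]
      refine mul_mem ?_ ?_
      · exact SetLike.le_def.mp le_sup_right (Subgroup.subset_closure (P3 b₂ hb₂ a₁))
      · exact SetLike.le_def.mp le_sup_left
          (hXn.conj_mem _ (Subgroup.subset_closure (P4 c₂ hc₂ a₁)) b₂)
    · refine sup_le ?_ ?_
      · rw [Subgroup.closure_le]
        rintro z ⟨b, _, c, _, rfl⟩
        exact Subgroup.subset_closure ⟨b, c, rfl⟩
      · rw [Subgroup.closure_le]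
        rintro z ⟨c, _, b, _, rfl⟩
        exact Subgroup.subset_closure ⟨c, b, rfl⟩
  haveI := hYn
  rw [hmain, ← Subgroup.mul_normal]
end

section
/- Let A be a skew brace, and B, C trivial sub-skew braces with C a left ideal in A^op and B both a left and right ideal in A^op. Then for all b ∈ B and c ∈ C, the element λ^op_b(c)c⁻¹ lies in B ∩ C, where λ^op_b(c) = (b∘c)b⁻¹. -/
open SkewBrace in
/-- If `B`, `C` are trivial sub-skew braces, `C` a left ideal in `Aᵒᵖ` and `B` both a
left and right ideal in `Aᵒᵖ`, then `λᵒᵖ_b(c)c⁻¹ ∈ B ∩ C` for all `b ∈ B`, `c ∈ C`. -/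
theorem lamop_mul_inv_mem {A : Type*} [SkewBrace A] (B C : Subgroup A)
    (hBcirc : ∀ x ∈ B, ∀ y ∈ B, circ x y ∈ B) (hBsinv : ∀ x ∈ B, sinv x ∈ B)
    (hCcirc : ∀ x ∈ C, ∀ y ∈ C, circ x y ∈ C) (hCsinv : ∀ x ∈ C, sinv x ∈ C)
    (hBtriv : ∀ x ∈ B, ∀ y ∈ B, circ x y = x * y)
    (hCtriv : ∀ x ∈ C, ∀ y ∈ C, circ x y = x * y)
    (hCleftop : ∀ a : A, ∀ x ∈ C, lamop a x ∈ C)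
    (hBleftop : ∀ a : A, ∀ x ∈ B, lamop a x ∈ B)
    (hBrightop : ∀ x ∈ B, ∀ a : A, a⁻¹ * lamop x a ∈ B) :
    ∀ b ∈ B, ∀ c ∈ C, lamop b c * c⁻¹ ∈ B ∧ lamop b c * c⁻¹ ∈ C := by
  intro b hb c hc
  -- y = λᵒᵖ_b(c) ∈ C by the left ideal property
  have hyC : lamop b c ∈ C := hCleftop b c hc
  -- u = c⁻¹ * y ∈ B by the right ideal property, and ∈ C since c⁻¹, y ∈ C
  have huB : c⁻¹ * lamop b c ∈ B := hBrightop b hb c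
  have huC : c⁻¹ * lamop b c ∈ C := C.mul_mem (C.inv_mem hc) hyC
  -- λᵒᵖ_c(u) = c * u * c⁻¹ = y * c⁻¹ since C is trivial
  have key : lamop c (c⁻¹ * lamop b c) = lamop b c * c⁻¹ := by
    show circ c (c⁻¹ * lamop b c) * c⁻¹ = lamop b c * c⁻¹
    rw [hCtriv c hc _ huC]
    group
  constructor
  · rw [← key]; exact hBleftop c _ huB
  · exact C.mul_mem hyC (C.inv_mem hc)
end

section
/- Let A be a skew brace and C a trivial sub-skew brace which is a left ideal in A^op. Then for all a ∈ A and c ∈ C: (i) c∘a∘c̄ ∈ (λ^op_c(a)·c)∘C, and (ii) a∘C = C·a, where c̄ is the ∘-inverse of c and λ^op_c(a) = (c∘a)c⁻¹. -/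
open SkewBrace in
lemma circ_inv' {A : Type*} [SkewBrace A] (a b : A) :
    circ a b⁻¹ = a * (circ a b)⁻¹ * a := by
  have h := brace a b b⁻¹
  rw [mul_inv_cancel, circ_one] at h
  have : circ a b * a⁻¹ * circ a b⁻¹ = circ a b * a⁻¹ * (a * (circ a b)⁻¹ * a) := by
    rw [← h]; group
  exact mul_left_cancel this

open SkewBrace in
lemma lamop_comp {A : Type*} [SkewBrace A] (a b x : A) :
    lamop a (lamop b x) = lamop (circ a b) x := by
  unfold lamop
  rw [brace, circ_inv', circ_assoc]
  group
open SkewBrace in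
/-- If `C` is a trivial sub-skew brace which is a left ideal in `Aᵒᵖ`, then
`c∘a∘c̄ ∈ (λᵒᵖ_c(a)c)∘C` and `a∘C = Ca` for all `a ∈ A`, `c ∈ C`. -/
theorem coset_lemma {A : Type*} [SkewBrace A] (C : Subgroup A)
    (hCcirc : ∀ x ∈ C, ∀ y ∈ C, circ x y ∈ C) (hCsinv : ∀ x ∈ C, sinv x ∈ C)
    (hCtriv : ∀ x ∈ C, ∀ y ∈ C, circ x y = x * y)
    (hCleftop : ∀ a : A, ∀ x ∈ C, lamop a x ∈ C) :
    ∀ a : A, ∀ c ∈ C,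
      (∃ z ∈ C, circ (circ c a) (sinv c) = circ (lamop c a * c) z) ∧
      {x : A | ∃ y ∈ C, x = circ a y} = {x : A | ∃ y ∈ C, x = y * a} := by
  intro a c hc
  refine ⟨⟨sinv c, hCsinv c hc, by simp [lamop]⟩, ?_⟩
  ext x
  constructor
  · rintro ⟨y, hy, rfl⟩
    exact ⟨lamop a y, hCleftop a y hy, by simp [lamop]⟩
  · rintro ⟨y, hy, rfl⟩
    refine ⟨lamop (sinv a) y, hCleftop _ y hy, ?_⟩
    have h : lamop a (lamop (sinv a) y) = y := by
      rw [lamop_comp, circ_sinv]; simp [lamop, one_circ]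
    have : circ a (lamop (sinv a) y) = lamop a (lamop (sinv a) y) * a := by
      simp [lamop]
    rw [this, h]
end

section
/- Let A be a skew brace with trivial sub-skew braces B and C, where B and C are left ideals in A^op. Then for all b ∈ B and c ∈ C, b*c = c̄ ∘ b̄₁ ∘ c₂ ∘ b₂, where b₁ = λ^op_c(b)⁻¹ ∈ B, c₂ = λ^op_{b₁}(c·λ^op_b(c)·c⁻¹) ∈ C, and b₂ = λ^op_{c̄₂}(b₁) ∈ B. -/
namespace SkewBrace
variable {A : Type*} [SkewBrace A]

lemma lamop_mul' (a x y : A) : lamop a (x * y) = lamop a x * lamop a y := by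
  simp only [lamop, brace]; group

lemma lamop_one'' (a : A) : lamop a 1 = 1 := by simp [lamop, circ_one]

lemma one_lamop'' (x : A) : lamop 1 x = x := by simp [lamop, one_circ]

lemma lamop_inv' (a x : A) : lamop a x⁻¹ = (lamop a x)⁻¹ := by
  have h : lamop a x * lamop a x⁻¹ = 1 := by
    rw [← lamop_mul', mul_inv_cancel, lamop_one'']
  exact (inv_eq_of_mul_eq_one_right h).symm

lemma circ_inv' (a x : A) : circ a x⁻¹ = a * (circ a x)⁻¹ * a := by
  have h := brace a x x⁻¹
  rw [mul_inv_cancel, circ_one] at h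
  apply mul_left_cancel (a := circ a x * a⁻¹)
  rw [← h]; group

lemma lamop_lamop' (a b x : A) : lamop a (lamop b x) = lamop (circ a b) x := by
  simp only [lamop, brace, circ_inv', circ_assoc]
  group

lemma lamop_sinv_lamop' (a x : A) : lamop (sinv a) (lamop a x) = x := by
  rw [lamop_lamop', sinv_circ, one_lamop'']

lemma circ_eq_lamop_mul' (a b : A) : circ a b = lamop a b * a := by
  simp [lamop]

lemma sinv_eq_inv_of_triv' {S : Subgroup A} (hsinv : ∀ x ∈ S, sinv x ∈ S)
    (htriv : ∀ x ∈ S, ∀ y ∈ S, circ x y = x * y) {x : A} (hx : x ∈ S) :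
    sinv x = x⁻¹ := by
  have h := sinv_circ x
  rw [htriv _ (hsinv x hx) _ hx] at h
  exact eq_inv_of_mul_eq_one_left h

end SkewBrace

open SkewBrace in
/-- If `B`, `C` are trivial sub-skew braces which are left ideals in `Aᵒᵖ`, then
`b*c = c̄ ∘ b̄₁ ∘ c₂ ∘ b₂` with `b₁ = λᵒᵖ_c(b)⁻¹ ∈ B`,
`c₂ = λᵒᵖ_{b₁}(c λᵒᵖ_b(c) c⁻¹) ∈ C`, `b₂ = λᵒᵖ_{c̄₂}(b₁) ∈ B`. -/
theorem star_decomposition {A : Type*} [SkewBrace A] (B C : Subgroup A)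
    (hBcirc : ∀ x ∈ B, ∀ y ∈ B, circ x y ∈ B) (hBsinv : ∀ x ∈ B, sinv x ∈ B)
    (hCcirc : ∀ x ∈ C, ∀ y ∈ C, circ x y ∈ C) (hCsinv : ∀ x ∈ C, sinv x ∈ C)
    (hBtriv : ∀ x ∈ B, ∀ y ∈ B, circ x y = x * y)
    (hCtriv : ∀ x ∈ C, ∀ y ∈ C, circ x y = x * y)
    (hBleftop : ∀ a : A, ∀ x ∈ B, lamop a x ∈ B)
    (hCleftop : ∀ a : A, ∀ x ∈ C, lamop a x ∈ C) :
    ∀ b ∈ B, ∀ c ∈ C,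
      (lamop c b)⁻¹ ∈ B ∧
      lamop (lamop c b)⁻¹ (c * lamop b c * c⁻¹) ∈ C ∧
      lamop (sinv (lamop (lamop c b)⁻¹ (c * lamop b c * c⁻¹))) (lamop c b)⁻¹ ∈ B ∧
      star b c =
        circ (circ (circ (sinv c) (sinv (lamop c b)⁻¹))
            (lamop (lamop c b)⁻¹ (c * lamop b c * c⁻¹)))
          (lamop (sinv (lamop (lamop c b)⁻¹ (c * lamop b c * c⁻¹))) (lamop c b)⁻¹) := by
  intro b hb c hc
  set b1 : A := (lamop c b)⁻¹ with hb1e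
  set t : A := c * lamop b c * c⁻¹ with hte
  set c2 : A := lamop b1 t with hc2e
  set b2 : A := lamop (sinv c2) b1 with hb2e
  have hb1 : b1 ∈ B := by rw [hb1e]; exact B.inv_mem (hBleftop c b hb)
  have ht : t ∈ C := by
    rw [hte]; exact C.mul_mem (C.mul_mem hc (hCleftop b c hc)) (C.inv_mem hc)
  have hc2 : c2 ∈ C := by rw [hc2e]; exact hCleftop _ _ ht
  have hb2 : b2 ∈ B := by rw [hb2e]; exact hBleftop _ _ hb1
  have hsc : sinv c = c⁻¹ := sinv_eq_inv_of_triv' hCsinv hCtriv hc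
  have hsb1 : sinv b1 = b1⁻¹ := sinv_eq_inv_of_triv' hBsinv hBtriv hb1
  refine ⟨hb1, hc2, hb2, ?_⟩
  have s1 : circ c2 b2 = b1 * c2 := by
    rw [circ_eq_lamop_mul', hb2e, lamop_lamop', circ_sinv, one_lamop'']
  have l1 : lamop (sinv b1) c2 = t := by rw [hc2e, lamop_sinv_lamop']
  have s2 : circ (sinv b1) (b1 * c2) = b1 * (t * b1⁻¹) := by
    rw [brace, sinv_circ, one_mul, circ_eq_lamop_mul', l1, hsb1]; group
  have m2 : lamop (sinv c) b1 = b⁻¹ := by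
    rw [hb1e, lamop_inv', lamop_sinv_lamop']
  have m3 : lamop (sinv c) c = c := by
    rw [lamop, sinv_circ, hsc, inv_inv, one_mul]
  have m4 : lamop (sinv c) (lamop b c) = c⁻¹ * lamop b c * c := by
    rw [lamop, hCtriv _ (hCsinv c hc) _ (hCleftop b c hc), hsc]; group
  have s3 : circ (sinv c) (b1 * (t * b1⁻¹)) = star b c := by
    rw [circ_eq_lamop_mul', hte]
    simp only [lamop_mul', lamop_inv', m2, m3, m4]
    simp only [SkewBrace.star, circ_eq_lamop_mul', hsc]
    group
  rw [circ_assoc, circ_assoc, s1, s2, s3]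
end

section
/- Let B be a group, C an abelian group, and φ : C → Aut(B), ψ : B → Aut(C) homomorphisms with φ_{ψ_b(c)} = φ_c for all b ∈ B, c ∈ C. Then A = B × C with operations (b₁,c₁)·(b₂,c₂) = (b₁φ_{c₁}(b₂), c₁c₂) and (b₁,c₁)∘(b₂,c₂) = (b₁b₂, c₁ψ_{b₁}(c₂)) is a skew brace, i.e., the brace relation a₁∘(a₂·a₃) = (a₁∘a₂)·a₁⁻¹·(a₁∘a₃) holds for all a₁,a₂,a₃ ∈ A. -/
/-!
In any semidirect product, `x · a⁻¹ · y` has `B`-component `x_B · φ_{x_C a_C⁻¹}(a_B⁻¹ y_B)`.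
For `x = a₁ ∘ a₂`, `a = a₁`, `y = a₁ ∘ a₃` the twist `x_C a_C⁻¹` is `ψ_{b₁}(c₂)` because `C` is
abelian, and the compatibility `φ_{ψ_b(c)} = φ_c` makes it act on `b₃` as `φ_{c₂}` does in
`a₁ ∘ (a₂ · a₃)`. The `C`-components agree since `ψ_{b₁}` is multiplicative.
-/

namespace SemidirectProduct

variable {N G : Type*} [Group N] [Group G] {φ : G →* MulAut N}

theorem mul_inv_mul_left (x a y : N ⋊[φ] G) :
    (x * a⁻¹ * y).left = x.left * φ (x.right * a.right⁻¹) (a.left⁻¹ * y.left) := by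
  simp only [mul_left, inv_left, inv_right, map_mul, MulAut.mul_apply, mul_assoc]

theorem mul_inv_mul_right (x a y : N ⋊[φ] G) :
    (x * a⁻¹ * y).right = x.right * a.right⁻¹ * y.right := rfl

end SemidirectProduct

variable {B C : Type*} [Group B] [CommGroup C]

open SemidirectProduct in
/-- Given `φ : C → Aut(B)`, `ψ : B → Aut(C)` with `C` abelian and `φ_{ψ_b(c)} = φ_c`,
the set `A = B × C` with `(b₁,c₁)·(b₂,c₂) = (b₁φ_{c₁}(b₂), c₁c₂)` (the semidirect
product) and `(b₁,c₁)∘(b₂,c₂) = (b₁b₂, c₁ψ_{b₁}(c₂))` satisfies the brace relation. -/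
theorem construction_is_skew_brace (φ : C →* MulAut B) (ψ : B →* MulAut C)
    (hcompat : ∀ (b : B) (c : C), φ (ψ b c) = φ c)
    (circ : (B ⋊[φ] C) → (B ⋊[φ] C) → (B ⋊[φ] C))
    (hcirc : ∀ a₁ a₂ : B ⋊[φ] C,
      circ a₁ a₂ = ⟨a₁.left * a₂.left, a₁.right * ψ a₁.left a₂.right⟩) :
    ∀ a₁ a₂ a₃ : B ⋊[φ] C,
      circ a₁ (a₂ * a₃) = circ a₁ a₂ * a₁⁻¹ * circ a₁ a₃ := by
  intro a₁ a₂ a₃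
  have hright : (circ a₁ a₂).right * a₁.right⁻¹ = ψ a₁.left a₂.right := by
    rw [hcirc, mul_inv_cancel_comm]
  ext
  · rw [mul_inv_mul_left, hright, hcompat, hcirc, hcirc, hcirc]
    simp only [mul_left, inv_mul_cancel_left, mul_assoc]
  · rw [mul_inv_mul_right, hright, hcirc, hcirc]
    simp only [mul_right, map_mul, mul_left_comm]
end

section
/- With A = B × C the skew brace built from φ : C → Aut(B) and ψ : B → Aut(C) (C abelian, φ_{ψ_b(c)} = φ_c), the skew brace A is meta-trivial if and only if ψ_{φ_{c₁}(b₁)b₁⁻¹}(ψ_{b₂}(c₂)c₂⁻¹) = ψ_{b₂}(c₂)c₂⁻¹ for all b₁,b₂ ∈ B and c₁,c₂ ∈ C. -/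
variable {B C : Type*} [Group B] [CommGroup C]

open SemidirectProduct in
/-- The skew brace `A = B ⋊[φ] C` with `∘` as above is meta-trivial (i.e. `∘ = ·`
on `A' = A*A`) iff `ψ_{φ_{c₁}(b₁)b₁⁻¹}(ψ_{b₂}(c₂)c₂⁻¹) = ψ_{b₂}(c₂)c₂⁻¹` always. -/
theorem construction_metatrivial_iff (φ : C →* MulAut B) (ψ : B →* MulAut C)
    (hcompat : ∀ (b : B) (c : C), φ (ψ b c) = φ c)
    (circ : (B ⋊[φ] C) → (B ⋊[φ] C) → (B ⋊[φ] C))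
    (hcirc : ∀ a₁ a₂ : B ⋊[φ] C,
      circ a₁ a₂ = ⟨a₁.left * a₂.left, a₁.right * ψ a₁.left a₂.right⟩)
    (star : (B ⋊[φ] C) → (B ⋊[φ] C) → (B ⋊[φ] C))
    (hstar : ∀ a b : B ⋊[φ] C, star a b = a⁻¹ * circ a b * b⁻¹) :
    (∀ u ∈ Subgroup.closure {z : B ⋊[φ] C | ∃ x y, z = star x y},
      ∀ v ∈ Subgroup.closure {z : B ⋊[φ] C | ∃ x y, z = star x y},
        circ u v = u * v) ↔
    (∀ (b₁ b₂ : B) (c₁ c₂ : C),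
      ψ (φ c₁ b₁ * b₁⁻¹) (ψ b₂ c₂ * c₂⁻¹) = ψ b₂ c₂ * c₂⁻¹) := by
  -- explicit formula for `star`
  have hstar' : ∀ x y : B ⋊[φ] C, star x y =
      ⟨φ x.right⁻¹ y.left * y.left⁻¹, ψ x.left y.right * y.right⁻¹⟩ := by
    intro x y
    rw [hstar, hcirc]
    ext
    · simp [mul_left, inv_left, inv_right, hcompat, mul_assoc, map_mul]
    · simp [mul_right, inv_right]
  set S := {z : B ⋊[φ] C | ∃ x y, z = star x y} with hS
  set SB := Subgroup.closure {b : B | ∃ c b₀, b = φ c b₀ * b₀⁻¹} with hSB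
  set SC := Subgroup.closure {c : C | ∃ b c₀, c = ψ b c₀ * c₀⁻¹} with hSC
  -- SC is in the kernel of φ
  have hker : ∀ c ∈ SC, φ c = 1 := by
    intro c hc
    have : SC ≤ φ.ker := by
      rw [hSC]
      apply Subgroup.closure_le _ |>.mpr
      rintro _ ⟨b, c₀, rfl⟩
      simp [MonoidHom.mem_ker, map_mul, hcompat]
    exact this hc
  -- components of elements of the closure of S
  have hcomp : ∀ u ∈ Subgroup.closure S, u.left ∈ SB ∧ u.right ∈ SC := by
    intro u hu
    induction hu using Subgroup.closure_induction with
    | mem z hz =>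
      obtain ⟨x, y, rfl⟩ := hz
      rw [hstar']
      constructor
      · exact Subgroup.subset_closure ⟨x.right⁻¹, y.left, rfl⟩
      · exact Subgroup.subset_closure ⟨x.left, y.right, rfl⟩
    | one => simpa using ⟨one_mem SB, one_mem SC⟩
    | mul u v _ _ hu hv =>
      have h1 : φ u.right = 1 := hker _ hu.2
      constructor
      · rw [mul_left, h1]
        simpa using mul_mem hu.1 hv.1
      · rw [mul_right]; exact mul_mem hu.2 hv.2
    | inv u _ hu =>
      have h1 : φ u.right⁻¹ = 1 := hker _ (inv_mem hu.2)
      constructor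
      · rw [inv_left, h1]
        simpa using inv_mem hu.1
      · rw [inv_right]; exact inv_mem hu.2
  -- key: ψ_b fixes SC for b ∈ SB, given the hypothesis
  constructor
  · intro H b₁ b₂ c₁ c₂
    set u := star ⟨1, c₁⁻¹⟩ ⟨b₁, 1⟩ with hu
    set v := star ⟨b₂, 1⟩ ⟨1, c₂⟩ with hv
    have hu' : u = ⟨φ c₁ b₁ * b₁⁻¹, 1⟩ := by rw [hu, hstar']; ext <;> simp
    have hv' : v = ⟨1, ψ b₂ c₂ * c₂⁻¹⟩ := by rw [hv, hstar']; ext <;> simp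
    have humem : u ∈ Subgroup.closure S := Subgroup.subset_closure ⟨_, _, hu⟩
    have hvmem : v ∈ Subgroup.closure S := Subgroup.subset_closure ⟨_, _, hv⟩
    have := H u humem v hvmem
    rw [hcirc, hu', hv'] at this
    have := congrArg SemidirectProduct.right this
    simpa [mul_right] using this
  · intro hψ u hu v hv
    obtain ⟨huL, huR⟩ := hcomp u hu
    obtain ⟨hvL, hvR⟩ := hcomp v hv
    have key : ∀ b ∈ SB, ∀ d ∈ SC, ψ b d = d := by
      intro b hb
      induction hb using Subgroup.closure_induction with
      | mem b hb =>
        obtain ⟨c, b₀, rfl⟩ := hb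
        intro d hd
        induction hd using Subgroup.closure_induction with
        | mem d hd => obtain ⟨b', c', rfl⟩ := hd; exact hψ b₀ b' c c'
        | one => simp
        | mul d e _ _ hd he => rw [map_mul, hd, he]
        | inv d _ hd => rw [map_inv, hd]
      | one => intro d _; simp
      | mul b b' _ _ hb hb' =>
        intro d hd
        rw [map_mul, MulAut.mul_apply, hb' d hd, hb d hd]
      | inv b _ hb =>
        intro d hd
        have := hb d hd
        calc ψ b⁻¹ d = ψ b⁻¹ (ψ b d) := by rw [this]
        _ = d := by rw [← MulAut.mul_apply, ← map_mul]; simp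
    have hψfix : ψ u.left v.right = v.right := key _ huL _ hvR
    have hφfix : φ u.right = 1 := hker _ huR
    rw [hcirc]
    ext
    · rw [mul_left, hφfix]; simp
    · rw [mul_right, hψfix]
end
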